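/- arXiv:2006.08710 — 2 statements merged into one kernel-verified Lean document; each statement's English description precedes it below -/
import Mathlib

section
/- For every μ ∈ ℝ and σ > 0, the Spherical Log-Normal density f₃ integrates to 1 over ℝ³, i.e. ∫_{ℝ³} f₃(x) dx = 1 with respect to Lebesgue measure, so f₃ is a probability density on ℝ³. -/
open Real MeasureTheory Classical

/-- The Spherical Log-Normal density on ℝ³ with parameters `μ` and `σ`. -/

noncomputable def sphericalLogNormalDensity (μ σ : ℝ) (x : EuclideanSpace ℝ (Fin 3)) : ℝ :=
  if x = 0 then 0
  else (1 / (2 * (2 * π) ^ ((3 : ℝ) / 2) * σ * ‖x‖ ^ 3)) *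
    Real.exp (-(Real.log ‖x‖ - μ) ^ 2 / (2 * σ ^ 2))

/-!
In polar coordinates the volume element is `4π r² dr` and the density is `r⁻³` times a function
of `log r`, so the radial integral is `∫ g (log r) dr / r`; the substitution `t = log r` turns it
into the Gaussian integral `∫ exp (-(t - μ)² / (2σ²)) dt = σ √(2π)`, and
`4π · σ √(2π) = 2 (2π)^{3/2} σ` is exactly the normalising constant.
-/

open Set Metric

section LogRadial

variable {F : Type*} [NormedAddCommGroup F] [NormedSpace ℝ F]

theorem integral_Ioi_inv_smul_comp_log (g : ℝ → F) :
    ∫ r in Ioi (0 : ℝ), r⁻¹ • g (log r) = ∫ t, g t := by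
  rw [← range_exp, ← image_univ, integral_image_eq_integral_abs_deriv_smul
    MeasurableSet.univ (fun t _ => (hasDerivAt_exp t).hasDerivWithinAt) exp_injective.injOn,
    setIntegral_univ]
  simp [abs_of_pos (exp_pos _), smul_smul]

variable {E : Type*} [NormedAddCommGroup E] [NormedSpace ℝ E] [Nontrivial E]
  [FiniteDimensional ℝ E] [MeasurableSpace E] [BorelSpace E]

theorem integral_inv_norm_pow_finrank_smul_comp_log_norm (μ : Measure E) [μ.IsAddHaarMeasure]
    (g : ℝ → F) :
    ∫ x, (‖x‖ ^ Module.finrank ℝ E)⁻¹ • g (log ‖x‖) ∂μ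
      = Module.finrank ℝ E • μ.real (ball 0 1) • ∫ t, g t := by
  rw [integral_fun_norm_addHaar μ (fun r => (r ^ Module.finrank ℝ E)⁻¹ • g (log r)),
    ← integral_Ioi_inv_smul_comp_log]
  congr 2
  refine setIntegral_congr_fun measurableSet_Ioi fun r (hr : 0 < r) => ?_
  have hn : Module.finrank ℝ E = Module.finrank ℝ E - 1 + 1 :=
    (Nat.sub_add_cancel Module.finrank_pos).symm
  rw [smul_smul, hn, pow_succ, mul_inv, ← mul_assoc, Nat.add_sub_cancel,
    mul_inv_cancel₀ (pow_ne_zero _ hr.ne'), one_mul]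

end LogRadial

theorem integral_exp_neg_sq_sub_div_two_mul_sq (μ σ : ℝ) :
    ∫ t : ℝ, exp (-(t - μ) ^ 2 / (2 * σ ^ 2)) = |σ| * √(2 * π) := by
  have h : ∀ t : ℝ, -t ^ 2 / (2 * σ ^ 2) = -(2 * σ ^ 2)⁻¹ * t ^ 2 := fun t => by ring
  rw [integral_sub_right_eq_self (fun t => exp (-t ^ 2 / (2 * σ ^ 2))) μ]
  simp_rw [h]
  rw [integral_gaussian, div_inv_eq_mul, show π * (2 * σ ^ 2) = σ ^ 2 * (2 * π) by ring,
    sqrt_mul (sq_nonneg σ), sqrt_sq_eq_abs]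

/-- At `x = 0` the right-hand side vanishes too, because `(0 : ℝ)⁻¹ = 0`. -/
theorem sphericalLogNormalDensity_eq (μ σ : ℝ) (x : EuclideanSpace ℝ (Fin 3)) :
    sphericalLogNormalDensity μ σ x = (2 * (2 * π) ^ ((3 : ℝ) / 2) * σ)⁻¹ *
      ((‖x‖ ^ 3)⁻¹ * exp (-(log ‖x‖ - μ) ^ 2 / (2 * σ ^ 2))) := by
  rcases eq_or_ne x 0 with rfl | hx
  · simp [sphericalLogNormalDensity]
  · rw [sphericalLogNormalDensity, if_neg hx, one_div, mul_inv, ← mul_assoc]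

/-- For every `μ ∈ ℝ` and `σ > 0`, the Spherical Log-Normal density integrates to `1`
over ℝ³ with respect to Lebesgue measure; i.e. it is a probability density on ℝ³. -/
theorem integral_sphericalLogNormalDensity (μ σ : ℝ) (hσ : 0 < σ) :
    ∫ x : EuclideanSpace ℝ (Fin 3), sphericalLogNormalDensity μ σ x = 1 := by
  have hradial := integral_inv_norm_pow_finrank_smul_comp_log_norm
    (volume : Measure (EuclideanSpace ℝ (Fin 3))) fun t => exp (-(t - μ) ^ 2 / (2 * σ ^ 2))
  simp only [finrank_euclideanSpace_fin, smul_eq_mul] at hradial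
  have hpow : (2 * π) ^ ((3 : ℝ) / 2) = 2 * π * √(2 * π) := by
    rw [show (3 : ℝ) / 2 = 1 + 1 / 2 by norm_num, rpow_add (by positivity), rpow_one,
      sqrt_eq_rpow]
  simp_rw [sphericalLogNormalDensity_eq]
  rw [integral_const_mul, hradial, integral_exp_neg_sq_sub_div_two_mul_sq, abs_of_pos hσ,
    measureReal_def, EuclideanSpace.volume_ball_fin_three, ENNReal.ofReal_one, one_pow, one_mul,
    ENNReal.toReal_ofReal (by positivity), nsmul_eq_mul, hpow]
  field_simp
  ring
end

section
/- Fix μ ∈ ℝ and σ > 0, and let P be the probability measure on ℝ³ with density f₃ with respect to Lebesgue measure. Then the pushforward of P under the Euclidean norm map x ↦ ‖x‖ is the measure on ℝ with density f(r) = (1/(r·σ·√(2π))) · exp(−(log r − μ)²/(2σ²)) for r > 0 and f(r) = 0 for r ≤ 0, i.e. the norm of a Spherical Log-Normal sample is Log-Normal(μ, σ²) distributed. -/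
open Real MeasureTheory Classical

/-- The Log-Normal(μ, σ²) density on ℝ: `(1/(r·σ·√(2π)))·exp(−(log r − μ)²/(2σ²))`
for `r > 0` and `0` otherwise. -/
noncomputable def logNormalDensity (μ σ : ℝ) (r : ℝ) : ℝ :=
  if 0 < r then (1 / (r * σ * Real.sqrt (2 * π))) *
    Real.exp (-(Real.log r - μ) ^ 2 / (2 * σ ^ 2))
  else 0

/-!
The density `f₃` is radial: `f₃ x = f ‖x‖ / (4π ‖x‖²)`. In polar coordinates, Lebesgue measure on
ℝ³ is the surface measure of the unit sphere (of total mass `4π`) times `r² dr` on `(0, ∞)`, so the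
image of `f₃ · volume` under the norm has density `4π r² · f r / (4π r²) = f r` on `(0, ∞)`, and
`f` vanishes elsewhere.
-/

open Set

namespace MeasureTheory.Measure

theorem map_withDensity_comp {α β : Type*} [MeasurableSpace α] [MeasurableSpace β]
    (μ : Measure α) {f : α → β} (hf : Measurable f) {g : β → ENNReal} (hg : Measurable g) :
    (μ.withDensity (g ∘ f)).map f = (μ.map f).withDensity g := by
  ext s hs
  rw [map_apply hf hs, withDensity_apply _ (hf hs), withDensity_apply _ hs,
    setLIntegral_map hs hg hf, Function.comp_def]

variable {E : Type*} [NormedAddCommGroup E] [NormedSpace ℝ E] [MeasurableSpace E] [BorelSpace E]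
  [FiniteDimensional ℝ E] [Nontrivial E] (μ : Measure E) [μ.IsAddHaarMeasure]

theorem map_volumeIoiPow_subtype_val (n : ℕ) :
    (volumeIoiPow n).map Subtype.val =
      (volume.restrict (Ioi 0)).withDensity fun r : ℝ ↦ ENNReal.ofReal (r ^ n) := by
  rw [volumeIoiPow, ← map_comap_subtype_coe measurableSet_Ioi,
    ← map_withDensity_comp _ measurable_subtype_coe (by fun_prop)]
  rfl

theorem map_norm_addHaar :
    μ.map (‖·‖) = μ.toSphere univ • (volume.restrict (Ioi 0)).withDensity
      fun r : ℝ ↦ ENNReal.ofReal (r ^ (Module.finrank ℝ E - 1)) := by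
  have hnorm : (‖·‖) ∘ ((↑) : ({0}ᶜ : Set E) → E) =
      ((↑) ∘ Prod.snd) ∘ homeomorphUnitSphereProd E := by
    funext x
    simp
  calc μ.map (‖·‖) = ((μ.comap (↑)).map ((↑) : ({0}ᶜ : Set E) → E)).map (‖·‖) := by
        rw [map_comap_subtype_coe (measurableSet_singleton 0).compl, restrict_compl_singleton]
    _ = ((μ.comap (↑)).map (homeomorphUnitSphereProd E)).map ((↑) ∘ Prod.snd) := by
        rw [map_map measurable_norm measurable_subtype_coe, hnorm,
          map_map (by fun_prop) (homeomorphUnitSphereProd E).measurable]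
    _ = ((μ.toSphere.prod (volumeIoiPow (Module.finrank ℝ E - 1))).map Prod.snd).map (↑) := by
        rw [(measurePreserving_homeomorphUnitSphereProd μ).map_eq,
          map_map measurable_subtype_coe measurable_snd]
    _ = _ := by
        rw [map_snd_prod, Measure.map_smul, map_volumeIoiPow_subtype_val]

theorem map_norm_withDensity_fun_norm {g : ℝ → ENNReal} (hg : Measurable g) :
    (μ.withDensity fun x ↦ g ‖x‖).map (‖·‖) =
      μ.toSphere univ • (volume.restrict (Ioi 0)).withDensity
        fun r : ℝ ↦ ENNReal.ofReal (r ^ (Module.finrank ℝ E - 1)) * g r := by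
  rw [← Function.comp_def g, map_withDensity_comp μ measurable_norm hg, map_norm_addHaar,
    withDensity_smul_measure, ← withDensity_mul _ (by fun_prop) hg]
  rfl

end MeasureTheory.Measure

theorem EuclideanSpace.toSphere_volume_univ_fin_three :
    (volume : Measure (EuclideanSpace ℝ (Fin 3))).toSphere univ = ENNReal.ofReal (4 * π) := by
  rw [Measure.toSphere_apply_univ, finrank_euclideanSpace_fin, volume_ball_fin_three,
    ENNReal.ofReal_one, one_pow, one_mul, ← ENNReal.ofReal_natCast,
    ← ENNReal.ofReal_mul (by positivity)]
  congr 1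
  ring

@[fun_prop]
theorem measurable_logNormalDensity (μ σ : ℝ) : Measurable (logNormalDensity μ σ) := by
  unfold logNormalDensity
  exact Measurable.ite measurableSet_Ioi (by fun_prop) measurable_const

theorem logNormalDensity_of_nonpos (μ σ : ℝ) {r : ℝ} (hr : r ≤ 0) : logNormalDensity μ σ r = 0 :=
  if_neg hr.not_gt

theorem sphericalLogNormalDensity_eq_div (μ σ : ℝ) (x : EuclideanSpace ℝ (Fin 3)) :
    sphericalLogNormalDensity μ σ x = logNormalDensity μ σ ‖x‖ / (4 * π * ‖x‖ ^ 2) := by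
  rcases eq_or_ne x 0 with rfl | hx
  · simp [sphericalLogNormalDensity, logNormalDensity]
  have h32 : (2 * π) ^ ((3 : ℝ) / 2) = 2 * π * √(2 * π) := by
    rw [show (3 : ℝ) / 2 = 1 + 1 / 2 by norm_num, rpow_add (by positivity), rpow_one,
      ← sqrt_eq_rpow]
  rw [sphericalLogNormalDensity, logNormalDensity, if_neg hx, if_pos (norm_pos_iff.2 hx), h32]
  ring

theorem map_norm_sphericalLogNormal_eq_logNormal_general (μ σ : ℝ) :
    Measure.map (fun x : EuclideanSpace ℝ (Fin 3) => ‖x‖)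
        (volume.withDensity fun x => ENNReal.ofReal (sphericalLogNormalDensity μ σ x)) =
      volume.withDensity fun r => ENNReal.ofReal (logNormalDensity μ σ r) := by
  simp only [sphericalLogNormalDensity_eq_div]
  rw [Measure.map_norm_withDensity_fun_norm volume
      (g := fun r ↦ ENNReal.ofReal (logNormalDensity μ σ r / (4 * π * r ^ 2)))
      (by fun_prop),
    EuclideanSpace.toSphere_volume_univ_fin_three, finrank_euclideanSpace_fin,
    ← withDensity_smul' _ _ ENNReal.ofReal_ne_top, ← withDensity_indicator measurableSet_Ioi]
  congr 1
  funext r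
  rcases lt_or_ge 0 r with hr | hr
  · rw [indicator_of_mem (mem_Ioi.2 hr), Pi.smul_apply, smul_eq_mul,
      ← ENNReal.ofReal_mul (by positivity), ← ENNReal.ofReal_mul (by positivity)]
    congr 1
    field_simp
    ring
  · rw [indicator_of_notMem (notMem_Ioi.2 hr), logNormalDensity_of_nonpos μ σ hr,
      ENNReal.ofReal_zero]

/-- The norm of a Spherical Log-Normal sample is Log-Normal(μ, σ²) distributed:
the pushforward under `x ↦ ‖x‖` of the measure with density `f₃` is the measure
on ℝ with the Log-Normal(μ, σ²) density. -/
theorem map_norm_sphericalLogNormal_eq_logNormal (μ σ : ℝ) (hσ : 0 < σ) :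
    Measure.map (fun x : EuclideanSpace ℝ (Fin 3) => ‖x‖)
        (volume.withDensity fun x => ENNReal.ofReal (sphericalLogNormalDensity μ σ x)) =
      volume.withDensity fun r => ENNReal.ofReal (logNormalDensity μ σ r) :=
  map_norm_sphericalLogNormal_eq_logNormal_general μ σ
end
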